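/- Let Cl be the ring presented by generators t_i for i ∈ ℤ and relations t_i² = 0, t_i t_j + t_j t_i = 0 for |i−j| > 1, and t_i t_{i+1} + t_{i+1} t_i = 1. The ring homomorphism Cl → End_ℤ(V_F) sending each generator t_i to the operator t_i on V_F is injective; that is, the Fock representation of the Clifford algebra Cl on V_F is faithful. -/

import Mathlib

/-- The defining property of the set `𝓘𝓜`: strictly increasing sequences of even
integers which eventually satisfy `x_i = 2i + 2k` for some charge `k ∈ ℤ`. -/
def IMprop (x : ℕ → ℤ) : Prop :=
  StrictMono x ∧ (∀ i, Even (x i)) ∧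
    ∃ k : ℤ, ∃ N : ℕ, ∀ i : ℕ, N ≤ i → x i = 2 * ((i : ℤ) + 1) + 2 * k

/-- The set `𝓘𝓜` of basis sequences (`0`-based indexing: entry `i` is `x_{i+1}`). -/
def IM : Type := {x : ℕ → ℤ // IMprop x}

/-- The fermionic Fock space `V_F`, the free abelian group on the basis `𝓘𝓜`. -/
abbrev VF : Type := IM →₀ ℤ

lemma IM.exists_ge (x : IM) (m : ℤ) : ∃ N : ℕ, m ≤ x.1 N := by
  obtain ⟨-, -, k, N, hN⟩ := x.2
  refine ⟨N + (m - x.1 N).toNat, ?_⟩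
  have h1 := hN N le_rfl
  have h2 := hN (N + (m - x.1 N).toNat) (Nat.le_add_right _ _)
  have h3 : (m - x.1 N) ≤ ((m - x.1 N).toNat : ℤ) := Int.self_le_toNat _
  have h4 : (0 : ℤ) ≤ ((m - x.1 N).toNat : ℤ) := Int.natCast_nonneg _
  push_cast at h2
  omega

/-- The position where `2j` is to be inserted into (or found in) `x`: the least
index `N` with `2j ≤ x N`, i.e. the number of entries of `x` smaller than `2j`. -/
def posIdx (j : ℤ) (x : IM) : ℕ := Nat.find (IM.exists_ge x (2 * j))

lemma posIdx_le (j : ℤ) (x : IM) : 2 * j ≤ x.1 (posIdx j x) :=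
  Nat.find_spec (IM.exists_ge x (2 * j))

lemma posIdx_lt (j : ℤ) (x : IM) : ∀ i, i < posIdx j x → x.1 i < 2 * j := by
  intro i hi
  have := Nat.find_min (IM.exists_ge x (2 * j)) hi
  omega

/-- Insertion of a value `a` into a sequence at position `p`. -/
def insSeq (x : ℕ → ℤ) (p : ℕ) (a : ℤ) : ℕ → ℤ :=
  fun i => if i < p then x i else if i = p then a else x (i - 1)

/-- Deletion of the entry at position `p` of a sequence. -/
def delSeq (x : ℕ → ℤ) (p : ℕ) : ℕ → ℤ :=
  fun i => if i < p then x i else x (i + 1)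

lemma insSeq_mem (x : ℕ → ℤ) (hx : IMprop x) (p : ℕ) (a : ℤ) (ha : Even a)
    (hlow : ∀ i, i < p → x i < a) (hhigh : a < x p) :
    IMprop (insSeq x p a) := by
  obtain ⟨hm, he, k, N, hN⟩ := hx
  refine ⟨strictMono_nat_of_lt_succ ?_, ?_, k - 1, max N p + 1, ?_⟩
  · intro i
    by_cases h1 : i + 1 < p
    · have hi : i < p := by omega
      simp only [insSeq, if_pos hi, if_pos h1]
      exact hm (Nat.lt_succ_self i)
    · by_cases h2 : i + 1 = p
      · have hi : i < p := by omega
        simp only [insSeq, if_pos hi, if_neg h1, if_pos h2]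
        exact hlow i hi
      · by_cases h3 : i = p
        · have hnl : ¬ i < p := by omega
          simp only [insSeq, if_neg hnl, if_pos h3, if_neg h1, if_neg h2]
          have e1 : i + 1 - 1 = i := by omega
          rw [e1, h3]
          exact hhigh
        · have hnl : ¬ i < p := by omega
          simp only [insSeq, if_neg hnl, if_neg h3, if_neg h1, if_neg h2]
          have e1 : i + 1 - 1 = i := by omega
          rw [e1]
          exact hm (by omega : i - 1 < i)
  · intro i
    by_cases h1 : i < p
    · simpa [insSeq, if_pos h1] using he i
    · by_cases h2 : i = p
      · simpa [insSeq, h1, h2] using ha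
      · simpa [insSeq, h1, h2] using he (i - 1)
  · intro i hi
    have h1 : ¬ i < p := by omega
    have h2 : ¬ i = p := by omega
    simp only [insSeq, if_neg h1, if_neg h2]
    rw [hN (i - 1) (by omega)]
    rw [Nat.cast_sub (by omega : 1 ≤ i)]
    push_cast
    ring

lemma delSeq_mem (x : ℕ → ℤ) (hx : IMprop x) (p : ℕ) : IMprop (delSeq x p) := by
  obtain ⟨hm, he, k, N, hN⟩ := hx
  refine ⟨strictMono_nat_of_lt_succ ?_, ?_, k + 1, max N p, ?_⟩
  · intro i
    by_cases h1 : i + 1 < p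
    · simp only [delSeq, if_pos (by omega : i < p), if_pos h1]
      exact hm (Nat.lt_succ_self i)
    · by_cases h2 : i < p
      · simp only [delSeq, if_pos h2, if_neg h1]
        exact hm (by omega : i < i + 1 + 1)
      · simp only [delSeq, if_neg h2, if_neg h1]
        exact hm (by omega : i + 1 < i + 1 + 1)
  · intro i
    by_cases h1 : i < p
    · simpa [delSeq, h1] using he i
    · simpa [delSeq, h1] using he (i + 1)
  · intro i hi
    simp only [delSeq, if_neg (by omega : ¬ i < p)]
    rw [hN (i + 1) (by omega)]
    push_cast
    ring

/-- The creating operator `ψ_j` on a basis element: zero if `2j` occurs in `x`,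
and otherwise `(−1)^n` times the basis element obtained by inserting `2j`,
where `n` is the number of entries of `x` smaller than `2j`. -/
noncomputable def psiB (j : ℤ) (x : IM) : VF :=
  if h : x.1 (posIdx j x) = 2 * j then 0
  else ((-1 : ℤ) ^ (posIdx j x)) •
    Finsupp.single (⟨insSeq x.1 (posIdx j x) (2 * j),
      insSeq_mem x.1 x.2 (posIdx j x) (2 * j) (even_two_mul j) (posIdx_lt j x)
        (lt_of_le_of_ne (posIdx_le j x) (fun hh => h hh.symm))⟩ : IM) 1

/-- The annihilating operator `ψ_j^*` on a basis element: zero if `2j` does not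
occur in `x`, and otherwise `(−1)^{n−1}` times the basis element obtained by
deleting the entry `x_n = 2j`. -/
noncomputable def psiStarB (j : ℤ) (x : IM) : VF :=
  if _ : x.1 (posIdx j x) = 2 * j then
    ((-1 : ℤ) ^ (posIdx j x)) •
      Finsupp.single (⟨delSeq x.1 (posIdx j x), delSeq_mem x.1 x.2 (posIdx j x)⟩ : IM) 1
  else 0

/-- The creating operator `ψ_j : V_F → V_F`. -/
noncomputable def psiOp (j : ℤ) : VF →ₗ[ℤ] VF := Finsupp.lift VF ℤ IM (psiB j)

/-- The annihilating operator `ψ_j^* : V_F → V_F`. -/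
noncomputable def psiStarOp (j : ℤ) : VF →ₗ[ℤ] VF := Finsupp.lift VF ℤ IM (psiStarB j)

/-- The Clifford operators: `t_{2j} = ψ_j` and `t_{2j−1} = ψ_j^* + ψ_{j−1}^*`. -/
noncomputable def tOp (m : ℤ) : VF →ₗ[ℤ] VF :=
  if m % 2 = 0 then psiOp (m / 2)
  else psiStarOp ((m + 1) / 2) + psiStarOp ((m + 1) / 2 - 1)

/-- The relations of the Clifford algebra `Cl`, imposed on the free ring on
generators `t_i`, `i ∈ ℤ`. -/
inductive ClRel : FreeAlgebra ℤ ℤ → FreeAlgebra ℤ ℤ → Prop where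
  | sq (i : ℤ) : ClRel (FreeAlgebra.ι ℤ i * FreeAlgebra.ι ℤ i) 0
  | far_anticomm (i j : ℤ) (h : 1 < |i - j|) :
      ClRel (FreeAlgebra.ι ℤ i * FreeAlgebra.ι ℤ j + FreeAlgebra.ι ℤ j * FreeAlgebra.ι ℤ i) 0
  | adjacent (i : ℤ) :
      ClRel (FreeAlgebra.ι ℤ i * FreeAlgebra.ι ℤ (i + 1) +
        FreeAlgebra.ι ℤ (i + 1) * FreeAlgebra.ι ℤ i) 1

/-- The Clifford algebra `Cl`, presented by generators `t_i` for `i ∈ ℤ` and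
the relations `t_i² = 0`, `t_i t_j + t_j t_i = 0` for `|i−j| > 1`, and
`t_i t_{i+1} + t_{i+1} t_i = 1`. -/
abbrev Cl : Type := RingQuot ClRel

/-- The generator `t_i` of `Cl`. -/
def clT (i : ℤ) : Cl := RingQuot.mkRingHom ClRel (FreeAlgebra.ι ℤ i)

/-!
The representation exists because `ψ_j, ψ_j^*` satisfy the canonical anticommutation relations,
and these imply the defining relations of `Cl` for the operators `t_i`.

For faithfulness, the sorted monomials `t_{i_1} ⋯ t_{i_k}` (`i_1 < ⋯ < i_k`) span `Cl`, by the
usual straightening with the relations, so it suffices that their images are linearly independent.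
Let `Γ` be the parity operator `(-1)^charge` on `V_F`, which anticommutes with every `t_i`. If all
letters of a finite family of sorted monomials are at most `M`, then `s = Γ t_{M+1}` commutes with
every `t_y` for `y < M` and `[s, t_M] = Γ`. So the derivation `[s, -]` kills the monomials not
containing `M` and sends `T t_M` to `T Γ`; this peels off the largest letter and gives linear
independence by induction on the set of letters.
-/

section General

lemma anticomm_add_right {R : Type*} [Ring R] (a b c : R) :
    a * (b + c) + (b + c) * a = (a * b + b * a) + (a * c + c * a) := by
  noncomm_ring

lemma anticomm_add_left {R : Type*} [Ring R] (a b c : R) :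
    (a + b) * c + c * (a + b) = (a * c + c * a) + (b * c + c * b) := by
  noncomm_ring

lemma LinearIndepOn.union_of_map_eq_zero {R M N ι : Type*} [Ring R] [AddCommGroup M] [Module R M]
    [AddCommGroup N] [Module R N] {v : ι → M} {s t : Set ι} (f : M →ₗ[R] N)
    (hst : Disjoint s t) (hs : LinearIndepOn R v s) (hfs : ∀ i ∈ s, f (v i) = 0)
    (hft : LinearIndepOn R (f ∘ v) t) : LinearIndepOn R v (s ∪ t) := by
  refine (linearIndepOn_union_iff hst).2 ⟨hs, hft.of_comp f, Submodule.disjoint_def.2 ?_⟩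
  intro x hxs hxt
  have hfx : f x = 0 := by
    refine (Submodule.span_le (p := LinearMap.ker f)).2 ?_ hxs
    rintro _ ⟨i, hi, rfl⟩
    exact hfs i hi
  obtain ⟨c, hc, rfl⟩ := (Finsupp.mem_span_image_iff_linearCombination R).1 hxt
  rw [Finsupp.apply_linearCombination] at hfx
  rw [linearIndepOn_iff.1 hft c hc hfx, map_zero]

end General

section Sequences

variable {x : ℕ → ℤ}

lemma insSeq_insSeq {p q : ℕ} (a b : ℤ) (hpq : p ≤ q) :
    insSeq (insSeq x p a) (q + 1) b = insSeq (insSeq x q b) p a := by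
  funext i
  simp only [insSeq]
  split_ifs <;> (try congr 1) <;> omega

lemma delSeq_insSeq_self {p : ℕ} (a : ℤ) : delSeq (insSeq x p a) p = x := by
  funext i
  simp only [delSeq, insSeq]
  split_ifs <;> (try congr 1) <;> omega

lemma insSeq_delSeq_self {p : ℕ} : insSeq (delSeq x p) p (x p) = x := by
  funext i
  simp only [delSeq, insSeq]
  split_ifs <;> (try congr 1) <;> omega

lemma delSeq_delSeq {p q : ℕ} (hpq : p ≤ q) :
    delSeq (delSeq x (q + 1)) p = delSeq (delSeq x p) q := by
  funext i
  simp only [delSeq]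
  split_ifs <;> (try congr 1) <;> omega

lemma delSeq_insSeq_of_le {p q : ℕ} (a : ℤ) (hpq : p ≤ q) :
    delSeq (insSeq x p a) (q + 1) = insSeq (delSeq x q) p a := by
  funext i
  simp only [delSeq, insSeq]
  split_ifs <;> (try congr 1) <;> omega

lemma delSeq_insSeq_of_ge {p q : ℕ} (a : ℤ) (hqp : q ≤ p) :
    delSeq (insSeq x (p + 1) a) q = insSeq (delSeq x q) p a := by
  funext i
  simp only [delSeq, insSeq]
  split_ifs <;> (try congr 1) <;> omega

lemma exists_insSeq_eq {n : ℕ} {c : ℤ} (p : ℕ) (a : ℤ) (h : x n = c) :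
    ∃ m, insSeq x p a m = c := by
  by_cases hn : n < p
  · exact ⟨n, by simpa [insSeq, hn] using h⟩
  · exact ⟨n + 1, by simpa [insSeq, show ¬ n + 1 < p by omega, show n + 1 ≠ p by omega] using h⟩

lemma insSeq_ne {c : ℤ} {p : ℕ} {a : ℤ} (h : ∀ n, x n ≠ c) (ha : a ≠ c) (m : ℕ) :
    insSeq x p a m ≠ c := by
  simp only [insSeq]
  split_ifs <;> first | exact h _ | exact ha

lemma exists_delSeq_eq {n p : ℕ} {c : ℤ} (h : x n = c) (hn : n ≠ p) :
    ∃ m, delSeq x p m = c := by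
  by_cases h1 : n < p
  · exact ⟨n, by simpa [delSeq, h1] using h⟩
  · exact ⟨n - 1, by simpa [delSeq, show ¬ n - 1 < p by omega, show n - 1 + 1 = n by omega]⟩

lemma delSeq_ne {c : ℤ} {p : ℕ} (h : ∀ n, x n ≠ c) (m : ℕ) : delSeq x p m ≠ c := by
  simp only [delSeq]
  split_ifs <;> exact h _

end Sequences

section Position

variable {j : ℤ} {x : IM}

lemma posIdx_eq_of_lt_of_le {p : ℕ} (h1 : ∀ i < p, x.1 i < 2 * j) (h2 : 2 * j ≤ x.1 p) :
    posIdx j x = p := by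
  rw [posIdx, Nat.find_eq_iff]
  exact ⟨h2, fun n hn hn2 => (hn2.not_gt (h1 n hn)).elim⟩

lemma posIdx_eq_of_eq {n : ℕ} (h : x.1 n = 2 * j) : posIdx j x = n :=
  posIdx_eq_of_lt_of_le (fun _ hi => h ▸ x.2.1 hi) h.ge

lemma ne_iff_posIdx : (∀ n, x.1 n ≠ 2 * j) ↔ x.1 (posIdx j x) ≠ 2 * j :=
  ⟨fun h => h _, fun h _ hn => h ((posIdx_eq_of_eq hn).symm ▸ hn)⟩

lemma posIdx_mono {i : ℤ} (h : i ≤ j) (x : IM) : posIdx i x ≤ posIdx j x :=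
  Nat.find_min' _ ((mul_le_mul_of_nonneg_left h zero_le_two).trans (posIdx_le j x))

lemma posIdx_le_of_le {n : ℕ} (h : 2 * j ≤ x.1 n) : posIdx j x ≤ n :=
  Nat.find_min' _ h

lemma lt_posIdx_of_lt {n : ℕ} (h : x.1 n < 2 * j) : n < posIdx j x := by
  by_contra hc
  exact (h.trans_le (posIdx_le j x)).not_ge (x.2.1.monotone (not_lt.mp hc))

end Position

section Psi

variable {i j : ℤ} {x : IM}

/-- An anonymous constructor `⟨y, hy⟩` elaborates at the subtype `{x // IMprop x}`, not at `IM`,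
so `Finsupp.single ⟨y, hy⟩ 1` would not be syntactically a vector of `VF`. -/
def IM.mk (y : ℕ → ℤ) (hy : IMprop y) : IM := ⟨y, hy⟩

lemma VF.endo_ext {f g : Module.End ℤ VF}
    (h : ∀ x, f (Finsupp.single x 1) = g (Finsupp.single x 1)) : f = g :=
  Finsupp.basisSingleOne.ext fun x => by simpa using h x

@[simp] lemma psiOp_single (j : ℤ) (x : IM) : psiOp j (Finsupp.single x 1) = psiB j x := by
  simp [psiOp]

@[simp] lemma psiStarOp_single (j : ℤ) (x : IM) :
    psiStarOp j (Finsupp.single x 1) = psiStarB j x := by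
  simp [psiStarOp]

lemma psiB_eq_zero {n : ℕ} (h : x.1 n = 2 * i) : psiB i x = 0 := by
  rw [psiB, dif_pos (posIdx_eq_of_eq h ▸ h)]

lemma psiStarB_eq_zero (h : ∀ n, x.1 n ≠ 2 * i) : psiStarB i x = 0 := by
  rw [psiStarB, dif_neg (h _)]

lemma psiB_eq {p : ℕ} (h1 : ∀ n < p, x.1 n < 2 * i) (h2 : 2 * i < x.1 p) :
    psiB i x = ((-1 : ℤ) ^ p) • Finsupp.single
      (IM.mk (insSeq x.1 p (2 * i)) (insSeq_mem x.1 x.2 p (2 * i) (even_two_mul i) h1 h2)) 1 := by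
  obtain rfl : posIdx i x = p := posIdx_eq_of_lt_of_le h1 h2.le
  rw [psiB, dif_neg h2.ne']
  rfl

lemma psiStarB_eq {p : ℕ} (h : x.1 p = 2 * i) :
    psiStarB i x = ((-1 : ℤ) ^ p) •
      Finsupp.single (IM.mk (delSeq x.1 p) (delSeq_mem x.1 x.2 p)) 1 := by
  obtain rfl : posIdx i x = p := posIdx_eq_of_eq h
  rw [psiStarB, dif_pos h]
  rfl

lemma psiB_eq_posIdx (h : x.1 (posIdx i x) ≠ 2 * i) :
    psiB i x = ((-1 : ℤ) ^ posIdx i x) • Finsupp.single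
      (IM.mk (insSeq x.1 (posIdx i x) (2 * i)) (insSeq_mem x.1 x.2 _ (2 * i) (even_two_mul i)
        (posIdx_lt i x) ((posIdx_le i x).lt_of_ne' h))) 1 :=
  psiB_eq (posIdx_lt i x) ((posIdx_le i x).lt_of_ne' h)

lemma smul_single_add_smul_single_eq_zero {y z : IM} (h : y.1 = z.1) {c d : ℤ}
    (hcd : c + d = 0) : c • Finsupp.single y (1 : ℤ) + d • Finsupp.single z 1 = 0 := by
  obtain rfl : y = z := Subtype.ext h
  rw [← add_smul, hcd, zero_smul]

lemma smul_single_eq_single {y z : IM} (h : y.1 = z.1) {c : ℤ} (hc : c = 1) :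
    c • Finsupp.single y (1 : ℤ) = Finsupp.single z 1 := by
  obtain rfl : y = z := Subtype.ext h
  rw [hc, one_smul]

lemma psiOp_psiB_eq_zero {n : ℕ} (h : x.1 n = 2 * i) (j : ℤ) : psiOp i (psiB j x) = 0 := by
  by_cases hj : x.1 (posIdx j x) = 2 * j
  · rw [psiB_eq_zero hj, map_zero]
  · obtain ⟨m, hm⟩ := exists_insSeq_eq (posIdx j x) (2 * j) h
    rw [psiB_eq_posIdx hj, map_smul, psiOp_single, psiB_eq_zero hm, smul_zero]

lemma psiStarOp_psiStarB_eq_zero (h : ∀ n, x.1 n ≠ 2 * i) (j : ℤ) :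
    psiStarOp i (psiStarB j x) = 0 := by
  by_cases hj : x.1 (posIdx j x) = 2 * j
  · rw [psiStarB_eq hj, map_smul, psiStarOp_single, psiStarB_eq_zero (delSeq_ne h), smul_zero]
  · rw [psiStarB_eq_zero (ne_iff_posIdx.mpr hj), map_zero]

lemma psiOp_psiStarB_eq_zero {n : ℕ} (h : x.1 n = 2 * i) (hij : i ≠ j) :
    psiOp i (psiStarB j x) = 0 := by
  by_cases hj : x.1 (posIdx j x) = 2 * j
  · have hn : n ≠ posIdx j x := fun hn => hij (by rw [hn, hj] at h; omega)
    obtain ⟨m, hm⟩ := exists_delSeq_eq h hn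
    rw [psiStarB_eq hj, map_smul, psiOp_single, psiB_eq_zero hm, smul_zero]
  · rw [psiStarB_eq_zero (ne_iff_posIdx.mpr hj), map_zero]

lemma psiStarOp_psiB_eq_zero (h : ∀ n, x.1 n ≠ 2 * j) (hij : i ≠ j) :
    psiStarOp j (psiB i x) = 0 := by
  by_cases hi : x.1 (posIdx i x) = 2 * i
  · rw [psiB_eq_zero hi, map_zero]
  · rw [psiB_eq_posIdx hi, map_smul, psiStarOp_single,
      psiStarB_eq_zero (insSeq_ne h (by omega)), smul_zero]

lemma psiOp_psiB_self (i : ℤ) (x : IM) : psiOp i (psiB i x) = 0 := by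
  by_cases hi : x.1 (posIdx i x) = 2 * i
  · rw [psiB_eq_zero hi, map_zero]
  · rw [psiB_eq_posIdx hi, map_smul, psiOp_single,
      psiB_eq_zero (show insSeq x.1 (posIdx i x) (2 * i) (posIdx i x) = 2 * i by simp [insSeq]),
      smul_zero]

end Psi

section CAR

variable {i j : ℤ}

lemma psiStarOp_psiStarB_self (i : ℤ) (x : IM) : psiStarOp i (psiStarB i x) = 0 := by
  by_cases hi : x.1 (posIdx i x) = 2 * i
  · have hne : ∀ m, delSeq x.1 (posIdx i x) m ≠ 2 * i := fun m => by
      have := @x.2.1 m (posIdx i x); have := @x.2.1 (posIdx i x) (m + 1)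
      simp only [delSeq]; split_ifs <;> omega
    rw [psiStarB_eq hi, map_smul, psiStarOp_single, psiStarB_eq_zero hne, smul_zero]
  · exact psiStarOp_psiStarB_eq_zero (ne_iff_posIdx.mpr hi) i

lemma psiOp_psiB_add_psiOp_psiB (hij : i < j) (x : IM) :
    psiOp i (psiB j x) + psiOp j (psiB i x) = 0 := by
  by_cases hi : x.1 (posIdx i x) = 2 * i
  · rw [psiOp_psiB_eq_zero hi, psiB_eq_zero hi, map_zero, add_zero]
  by_cases hj : x.1 (posIdx j x) = 2 * j
  · rw [psiOp_psiB_eq_zero hj, psiB_eq_zero hj, map_zero, zero_add]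
  set p := posIdx i x
  set q := posIdx j x
  have hpq : p ≤ q := posIdx_mono hij.le x
  have hi₁ := posIdx_lt i x
  have hi₂ : 2 * i < x.1 p := (posIdx_le i x).lt_of_ne' hi
  have hj₁ := posIdx_lt j x
  have hj₂ : 2 * j < x.1 q := (posIdx_le j x).lt_of_ne' hj
  have hA : ∀ n < p, insSeq x.1 q (2 * j) n < 2 * i := fun n hn => by
    have := hi₁ n; simp only [insSeq]; split_ifs <;> omega
  have hB : 2 * i < insSeq x.1 q (2 * j) p := by simp only [insSeq]; split_ifs <;> omega
  have hC : ∀ n < q + 1, insSeq x.1 p (2 * i) n < 2 * j := fun n hn => by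
    have := hi₁ n; have := hj₁ (n - 1); simp only [insSeq]; split_ifs <;> omega
  have hD : 2 * j < insSeq x.1 p (2 * i) (q + 1) := by
    simp only [insSeq, Nat.add_sub_cancel]; split_ifs <;> omega
  -- both sides insert `2i` at `p` and `2j` at `q + 1`, in either order, with signs
  -- `(-1)^(q + p)` and `(-1)^(p + q + 1)`
  rw [psiB_eq_posIdx hi, psiB_eq_posIdx hj, map_smul, map_smul, psiOp_single, psiOp_single,
    psiB_eq (x := IM.mk (insSeq x.1 q (2 * j)) _) hA hB,
    psiB_eq (x := IM.mk (insSeq x.1 p (2 * i)) _) hC hD, smul_smul, smul_smul]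
  exact smul_single_add_smul_single_eq_zero (insSeq_insSeq _ _ hpq).symm (by ring)

lemma psiStarOp_psiStarB_add_psiStarOp_psiStarB (hij : i < j) (x : IM) :
    psiStarOp i (psiStarB j x) + psiStarOp j (psiStarB i x) = 0 := by
  by_cases hi : ∃ p, x.1 p = 2 * i
  swap
  · rw [not_exists] at hi
    rw [psiStarOp_psiStarB_eq_zero hi, psiStarB_eq_zero hi, map_zero, add_zero]
  by_cases hj : ∃ q, x.1 q = 2 * j
  swap
  · rw [not_exists] at hj
    rw [psiStarOp_psiStarB_eq_zero hj, psiStarB_eq_zero hj, map_zero, zero_add]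
  obtain ⟨p, hp⟩ := hi
  obtain ⟨q, hq⟩ := hj
  obtain ⟨r, rfl⟩ := Nat.exists_eq_add_of_lt (x.2.1.lt_iff_lt.mp (by omega : x.1 p < x.1 q))
  have e₁ : delSeq x.1 (p + r + 1) p = 2 * i := by simpa [delSeq] using hp
  have e₂ : delSeq x.1 p (p + r) = 2 * j := by simpa [delSeq] using hq
  rw [psiStarB_eq hp, psiStarB_eq hq, map_smul, map_smul, psiStarOp_single, psiStarOp_single,
    psiStarB_eq (x := IM.mk (delSeq x.1 (p + r + 1)) _) e₁,
    psiStarB_eq (x := IM.mk (delSeq x.1 p) _) e₂, smul_smul, smul_smul]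
  exact smul_single_add_smul_single_eq_zero (delSeq_delSeq (by omega)) (by ring)

lemma psiOp_psiStarB_add_psiStarOp_psiB_self (i : ℤ) (x : IM) :
    psiOp i (psiStarB i x) + psiStarOp i (psiB i x) = Finsupp.single x 1 := by
  by_cases hi : x.1 (posIdx i x) = 2 * i
  · set p := posIdx i x
    have hA : ∀ n < p, delSeq x.1 p n < 2 * i := fun n hn => by
      have := @x.2.1 n p; simp only [delSeq, if_pos hn]; omega
    have hB : 2 * i < delSeq x.1 p p := by
      simpa [delSeq, hi] using @x.2.1 p (p + 1)
    rw [psiB_eq_zero hi, map_zero, add_zero, psiStarB_eq hi, map_smul, psiOp_single,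
      psiB_eq (x := IM.mk (delSeq x.1 p) _) hA hB, smul_smul]
    exact smul_single_eq_single (show insSeq (delSeq x.1 p) p (2 * i) = x.1 by
      rw [← hi]; exact insSeq_delSeq_self) (by rw [← mul_pow]; norm_num)
  · have e : insSeq x.1 (posIdx i x) (2 * i) (posIdx i x) = 2 * i := by simp [insSeq]
    rw [psiStarB_eq_zero (ne_iff_posIdx.mpr hi), map_zero, zero_add, psiB_eq_posIdx hi, map_smul,
      psiStarOp_single, psiStarB_eq (x := IM.mk (insSeq x.1 (posIdx i x) (2 * i)) _) e, smul_smul]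
    exact smul_single_eq_single (delSeq_insSeq_self _) (by rw [← mul_pow]; norm_num)

lemma psiOp_psiStarB_add_psiStarOp_psiB_of_lt (hij : i < j) {x : IM} {q : ℕ}
    (hq : x.1 q = 2 * j) (hi : x.1 (posIdx i x) ≠ 2 * i) :
    psiOp i (psiStarB j x) + psiStarOp j (psiB i x) = 0 := by
  set p := posIdx i x
  have hpq : p ≤ q := posIdx_le_of_le (by omega)
  have hi₁ := posIdx_lt i x
  have hi₂ : 2 * i < x.1 p := (posIdx_le i x).lt_of_ne' hi
  have hA : ∀ n < p, delSeq x.1 q n < 2 * i := fun n hn => by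
    have := hi₁ n; simp only [delSeq]; split_ifs <;> omega
  have hB : 2 * i < delSeq x.1 q p := by
    have := @x.2.1 q (p + 1); simp only [delSeq]; split_ifs <;> omega
  have e : insSeq x.1 p (2 * i) (q + 1) = 2 * j := by
    simpa [insSeq, show ¬ q + 1 < p by omega, show q + 1 ≠ p by omega] using hq
  rw [psiStarB_eq hq, psiB_eq_posIdx hi, map_smul, map_smul, psiOp_single, psiStarOp_single,
    psiB_eq (x := IM.mk (delSeq x.1 q) _) hA hB,
    psiStarB_eq (x := IM.mk (insSeq x.1 p (2 * i)) _) e, smul_smul, smul_smul]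
  exact smul_single_add_smul_single_eq_zero (delSeq_insSeq_of_le _ hpq).symm (by ring)

lemma psiOp_psiStarB_add_psiStarOp_psiB_of_gt (hij : j < i) {x : IM} {q : ℕ}
    (hq : x.1 q = 2 * j) (hi : x.1 (posIdx i x) ≠ 2 * i) :
    psiOp i (psiStarB j x) + psiStarOp j (psiB i x) = 0 := by
  obtain ⟨r, hr⟩ := Nat.exists_eq_add_of_lt (lt_posIdx_of_lt (j := i) (by omega : x.1 q < 2 * i))
  have hi₁ : ∀ n < q + r + 1, x.1 n < 2 * i := hr ▸ posIdx_lt i x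
  have hi₂ : 2 * i < x.1 (q + r + 1) := hr ▸ (posIdx_le i x).lt_of_ne' hi
  have hA : ∀ n < q + r, delSeq x.1 q n < 2 * i := fun n hn => by
    have := hi₁ n; have := hi₁ (n + 1); simp only [delSeq]; split_ifs <;> omega
  have hB : 2 * i < delSeq x.1 q (q + r) := by
    simpa [delSeq, show ¬ q + r < q by omega] using hi₂
  have e : insSeq x.1 (q + r + 1) (2 * i) q = 2 * j := by simpa [insSeq] using hq
  rw [psiStarB_eq hq, psiB_eq hi₁ hi₂, map_smul, map_smul, psiOp_single, psiStarOp_single,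
    psiB_eq (x := IM.mk (delSeq x.1 q) _) hA hB,
    psiStarB_eq (x := IM.mk (insSeq x.1 (q + r + 1) (2 * i)) _) e, smul_smul, smul_smul]
  exact smul_single_add_smul_single_eq_zero (delSeq_insSeq_of_ge _ (by omega)).symm (by ring)

lemma psiOp_psiStarB_add_psiStarOp_psiB (hij : i ≠ j) (x : IM) :
    psiOp i (psiStarB j x) + psiStarOp j (psiB i x) = 0 := by
  by_cases hj : ∃ q, x.1 q = 2 * j
  swap
  · rw [not_exists] at hj
    rw [psiStarB_eq_zero hj, psiStarOp_psiB_eq_zero hj hij, map_zero, add_zero]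
  obtain ⟨q, hq⟩ := hj
  by_cases hi : x.1 (posIdx i x) = 2 * i
  · rw [psiOp_psiStarB_eq_zero hi hij, psiB_eq_zero hi, map_zero, add_zero]
  rcases hij.lt_or_gt with h | h
  · exact psiOp_psiStarB_add_psiStarOp_psiB_of_lt h hq hi
  · exact psiOp_psiStarB_add_psiStarOp_psiB_of_gt h hq hi

end CAR

section Operators

lemma psiOp_mul_self (j : ℤ) : psiOp j * psiOp j = 0 :=
  VF.endo_ext fun x => by simpa using psiOp_psiB_self j x

lemma psiStarOp_mul_self (j : ℤ) : psiStarOp j * psiStarOp j = 0 :=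
  VF.endo_ext fun x => by simpa using psiStarOp_psiStarB_self j x

lemma psiOp_anticomm (i j : ℤ) : psiOp i * psiOp j + psiOp j * psiOp i = 0 := by
  rcases lt_trichotomy i j with h | rfl | h
  · exact VF.endo_ext fun x => by simpa using psiOp_psiB_add_psiOp_psiB h x
  · rw [psiOp_mul_self, add_zero]
  · exact VF.endo_ext fun x => by simpa [add_comm] using psiOp_psiB_add_psiOp_psiB h x

lemma psiStarOp_anticomm (i j : ℤ) :
    psiStarOp i * psiStarOp j + psiStarOp j * psiStarOp i = 0 := by
  rcases lt_trichotomy i j with h | rfl | h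
  · exact VF.endo_ext fun x => by simpa using psiStarOp_psiStarB_add_psiStarOp_psiStarB h x
  · rw [psiStarOp_mul_self, add_zero]
  · exact VF.endo_ext fun x => by
      simpa [add_comm] using psiStarOp_psiStarB_add_psiStarOp_psiStarB h x

lemma psiOp_psiStarOp_anticomm (i j : ℤ) :
    psiOp i * psiStarOp j + psiStarOp j * psiOp i = if i = j then 1 else 0 := by
  split_ifs with h
  · subst h
    exact VF.endo_ext fun x => by simpa using psiOp_psiStarB_add_psiStarOp_psiB_self i x
  · exact VF.endo_ext fun x => by simpa using psiOp_psiStarB_add_psiStarOp_psiB h x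

lemma tOp_two_mul (j : ℤ) : tOp (2 * j) = psiOp j := by
  rw [tOp, if_pos (by omega), Int.mul_ediv_cancel_left _ two_ne_zero]

lemma tOp_two_mul_add_one (j : ℤ) : tOp (2 * j + 1) = psiStarOp (j + 1) + psiStarOp j := by
  rw [tOp, if_neg (by omega), show (2 * j + 1 + 1) / 2 = j + 1 by omega, add_sub_cancel_right]

lemma tOp_anticomm (m n : ℤ) :
    tOp m * tOp n + tOp n * tOp m = if |m - n| = 1 then 1 else 0 := by
  simp only [abs_eq zero_le_one]
  obtain ⟨a, rfl | rfl⟩ := Int.even_or_odd' m <;> obtain ⟨b, rfl | rfl⟩ := Int.even_or_odd' n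
  · rw [tOp_two_mul, tOp_two_mul, psiOp_anticomm, if_neg (by omega)]
  · rw [tOp_two_mul, tOp_two_mul_add_one, anticomm_add_right, psiOp_psiStarOp_anticomm,
      psiOp_psiStarOp_anticomm]
    split_ifs <;> first | omega | simp
  · rw [add_comm, tOp_two_mul, tOp_two_mul_add_one, anticomm_add_right, psiOp_psiStarOp_anticomm,
      psiOp_psiStarOp_anticomm]
    split_ifs <;> first | omega | simp
  · rw [tOp_two_mul_add_one, tOp_two_mul_add_one, anticomm_add_right, anticomm_add_left,
      anticomm_add_left]
    rw [if_neg (by omega)]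
    simp only [psiStarOp_anticomm, add_zero]

lemma tOp_mul_self (m : ℤ) : tOp m * tOp m = 0 := by
  obtain ⟨a, rfl | rfl⟩ := Int.even_or_odd' m
  · rw [tOp_two_mul, psiOp_mul_self]
  · rw [tOp_two_mul_add_one, add_mul, mul_add, mul_add, psiStarOp_mul_self, psiStarOp_mul_self,
      zero_add, add_zero, add_comm]
    exact psiStarOp_anticomm _ _

end Operators

noncomputable def fockRep : Cl →ₐ[ℤ] Module.End ℤ VF :=
  RingQuot.liftAlgHom ℤ ⟨FreeAlgebra.lift ℤ tOp, fun {_ _} h => by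
    cases h with
    | sq i => simpa using tOp_mul_self i
    | far_anticomm i j hij => simpa [hij.ne'] using tOp_anticomm i j
    | adjacent i => simpa using tOp_anticomm i (i + 1)⟩

lemma mkAlgHom_ι_eq_clT (i : ℤ) : RingQuot.mkAlgHom ℤ ClRel (FreeAlgebra.ι ℤ i) = clT i := by
  rw [clT, ← RingQuot.mkAlgHom_coe ℤ, AlgHom.coe_toRingHom]

lemma fockRep_clT (i : ℤ) : fockRep (clT i) = tOp i := by
  rw [← mkAlgHom_ι_eq_clT, fockRep, RingQuot.liftAlgHom_mkAlgHom_apply, FreeAlgebra.lift_ι_apply]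

section Grading

noncomputable def charge (x : IM) : ℤ := x.2.2.2.choose

lemma charge_eq {x : IM} {k : ℤ} {N : ℕ}
    (h : ∀ i, N ≤ i → x.1 i = 2 * ((i : ℤ) + 1) + 2 * k) : charge x = k := by
  obtain ⟨N', h'⟩ := x.2.2.2.choose_spec
  have := h (max N N') (le_max_left _ _)
  have := h' (max N N') (le_max_right _ _)
  unfold charge
  omega

lemma charge_mk_insSeq (x : IM) (p : ℕ) (a : ℤ) (hy : IMprop (insSeq x.1 p a)) :
    charge (IM.mk (insSeq x.1 p a) hy) = charge x - 1 := by
  obtain ⟨N, hN⟩ := x.2.2.2.choose_spec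
  refine charge_eq (N := max N p + 1) fun i hi => ?_
  have := hN (i - 1) (by omega)
  simp only [IM.mk, insSeq, if_neg (show ¬ i < p by omega), if_neg (show i ≠ p by omega)]
  rw [this, Nat.cast_sub (by omega : 1 ≤ i), charge]
  push_cast
  ring

lemma charge_mk_delSeq (x : IM) (p : ℕ) (hy : IMprop (delSeq x.1 p)) :
    charge (IM.mk (delSeq x.1 p) hy) = charge x + 1 := by
  obtain ⟨N, hN⟩ := x.2.2.2.choose_spec
  refine charge_eq (N := max N p) fun i hi => ?_
  simp only [IM.mk, delSeq, if_neg (show ¬ i < p by omega)]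
  rw [hN (i + 1) (by omega), charge]
  push_cast
  ring

noncomputable def gammaOp : Module.End ℤ VF :=
  Finsupp.lift VF ℤ IM fun x => ((charge x).negOnePow : ℤ) • Finsupp.single x 1

lemma gammaOp_single (x : IM) :
    gammaOp (Finsupp.single x 1) = ((charge x).negOnePow : ℤ) • Finsupp.single x 1 := by
  simp only [gammaOp, Finsupp.lift_apply, Finsupp.sum_single_index, zero_smul, one_smul]

lemma gammaOp_mul_self : gammaOp * gammaOp = 1 :=
  VF.endo_ext fun x => by
    rw [Module.End.mul_apply, gammaOp_single, map_smul, gammaOp_single, smul_smul,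
      ← Units.val_mul, Int.units_mul_self, Units.val_one, one_smul, Module.End.one_apply]

lemma gammaOp_psiB (j : ℤ) (x : IM) :
    gammaOp (psiB j x) = -((charge x).negOnePow : ℤ) • psiB j x := by
  by_cases hj : x.1 (posIdx j x) = 2 * j
  · simp [psiB_eq_zero hj]
  · rw [psiB_eq_posIdx hj, map_smul, gammaOp_single, charge_mk_insSeq, Int.negOnePow_sub,
      Int.negOnePow_one, smul_comm]
    simp

lemma gammaOp_psiStarB (j : ℤ) (x : IM) :
    gammaOp (psiStarB j x) = -((charge x).negOnePow : ℤ) • psiStarB j x := by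
  by_cases hj : x.1 (posIdx j x) = 2 * j
  · rw [psiStarB_eq hj, map_smul, gammaOp_single, charge_mk_delSeq, Int.negOnePow_succ, smul_comm]
    simp
  · simp [psiStarB_eq_zero (ne_iff_posIdx.mpr hj)]

lemma gammaOp_mul_psiOp (j : ℤ) : gammaOp * psiOp j = -(psiOp j * gammaOp) :=
  VF.endo_ext fun x => by
    rw [Module.End.mul_apply, psiOp_single, gammaOp_psiB, LinearMap.neg_apply,
      Module.End.mul_apply, gammaOp_single, map_smul, psiOp_single, neg_smul]

lemma gammaOp_mul_psiStarOp (j : ℤ) : gammaOp * psiStarOp j = -(psiStarOp j * gammaOp) :=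
  VF.endo_ext fun x => by
    rw [Module.End.mul_apply, psiStarOp_single, gammaOp_psiStarB, LinearMap.neg_apply,
      Module.End.mul_apply, gammaOp_single, map_smul, psiStarOp_single, neg_smul]

lemma gammaOp_mul_tOp (m : ℤ) : gammaOp * tOp m = -(tOp m * gammaOp) := by
  obtain ⟨a, rfl | rfl⟩ := Int.even_or_odd' m
  · rw [tOp_two_mul, gammaOp_mul_psiOp]
  · rw [tOp_two_mul_add_one, mul_add, add_mul, gammaOp_mul_psiStarOp, gammaOp_mul_psiStarOp,
      neg_add]

end Grading

section Spanning

def sortedLists (s : Set ℤ) : Set (List ℤ) := {l | l.Pairwise (· < ·) ∧ ∀ y ∈ l, y ∈ s}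

def clMono (l : List ℤ) : Cl := (l.map clT).prod

def sortedSpan (s : Set ℤ) : Submodule ℤ Cl := Submodule.span ℤ (clMono '' sortedLists s)

lemma clMono_cons (a : ℤ) (l : List ℤ) : clMono (a :: l) = clT a * clMono l := rfl

lemma clT_mul_self (i : ℤ) : clT i * clT i = 0 := by
  simpa only [clT, map_mul, map_zero] using RingQuot.mkRingHom_rel (ClRel.sq i)

lemma clT_mul_clT_of_lt {a i : ℤ} (h : a < i) :
    clT i * clT a = (if i = a + 1 then 1 else 0) - clT a * clT i := by
  rw [eq_sub_iff_add_eq]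
  split_ifs with he
  · subst he
    simpa only [clT, map_add, map_mul, map_one, add_comm]
      using RingQuot.mkRingHom_rel (ClRel.adjacent a)
  · simpa only [clT, map_add, map_mul, map_zero]
      using RingQuot.mkRingHom_rel (ClRel.far_anticomm i a (by rw [abs_of_pos (by omega)]; omega))

lemma sortedLists_mono {s t : Set ℤ} (h : s ⊆ t) : sortedLists s ⊆ sortedLists t :=
  fun _ ⟨hl, hls⟩ => ⟨hl, fun y hy => h (hls y hy)⟩

lemma sortedSpan_mono {s t : Set ℤ} (h : s ⊆ t) : sortedSpan s ≤ sortedSpan t :=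
  Submodule.span_mono (Set.image_mono (sortedLists_mono h))

lemma clMono_mem_sortedSpan {l : List ℤ} {s : Set ℤ} (hl : l ∈ sortedLists s) :
    clMono l ∈ sortedSpan s :=
  Submodule.subset_span ⟨l, hl, rfl⟩

lemma clT_mul_mem_sortedSpan_insert {a : ℤ} {s : Set ℤ} (ha : ∀ y ∈ s, a < y) {z : Cl}
    (hz : z ∈ sortedSpan s) : clT a * z ∈ sortedSpan (insert a s) := by
  have : (sortedSpan s).map (LinearMap.mulLeft ℤ (clT a)) ≤ sortedSpan (insert a s) := by
    rw [sortedSpan, Submodule.map_span_le]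
    rintro _ ⟨l, ⟨hl, hls⟩, rfl⟩
    refine clMono_mem_sortedSpan ⟨List.pairwise_cons.2 ⟨fun y hy => ha y (hls y hy), hl⟩, ?_⟩
    simpa using fun y hy => Or.inr (hls y hy)
  exact this (Submodule.mem_map_of_mem hz)

lemma clT_mul_clMono_mem_sortedSpan {l : List ℤ} (hl : l.Pairwise (· < ·)) (i : ℤ) :
    clT i * clMono l ∈ sortedSpan {y | y ∈ i :: l} := by
  induction l generalizing i with
  | nil => exact clMono_mem_sortedSpan (l := [i]) ⟨List.pairwise_singleton _ _, by simp⟩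
  | cons a l ih =>
    obtain ⟨ha, hl'⟩ := List.pairwise_cons.1 hl
    rcases lt_trichotomy i a with h | rfl | h
    · exact clMono_mem_sortedSpan
        ⟨List.pairwise_cons.2 ⟨by simpa using ⟨h, fun y hy => h.trans (ha y hy)⟩, hl⟩, by simp⟩
    · rw [clMono_cons, ← mul_assoc, clT_mul_self, zero_mul]
      exact zero_mem _
    · rw [clMono_cons, ← mul_assoc, clT_mul_clT_of_lt h, sub_mul, mul_assoc]
      refine sub_mem ?_ (sortedSpan_mono ?_ (clT_mul_mem_sortedSpan_insert ?_ (ih hl' i)))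
      · split_ifs
        · rw [one_mul]
          exact clMono_mem_sortedSpan ⟨hl', by simp +contextual⟩
        · rw [zero_mul]
          exact zero_mem _
      · intro y; simp +contextual [or_left_comm]
      · simpa using ⟨h, ha⟩

lemma sortedSpan_univ : sortedSpan Set.univ = ⊤ := by
  have hgen (i : ℤ) : (sortedSpan Set.univ).map (LinearMap.mulLeft ℤ (clT i)) ≤
      sortedSpan Set.univ := by
    rw [sortedSpan, Submodule.map_span_le]
    rintro _ ⟨l, ⟨hl, -⟩, rfl⟩
    exact sortedSpan_mono (Set.subset_univ _) (clT_mul_clMono_mem_sortedSpan hl i)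
  suffices h : ∀ z : Cl, ∀ p ∈ sortedSpan Set.univ, z * p ∈ sortedSpan Set.univ from
    Submodule.eq_top_iff'.2 fun z => mul_one z ▸
      h z 1 (clMono_mem_sortedSpan (l := []) ⟨List.Pairwise.nil, by simp⟩)
  intro z
  obtain ⟨w, rfl⟩ := RingQuot.mkAlgHom_surjective ℤ ClRel z
  induction w using FreeAlgebra.induction with
  | grade0 r => exact fun p hp => by simpa [Algebra.smul_def] using Submodule.smul_mem _ r hp
  | grade1 i =>
    exact fun p hp => by rw [mkAlgHom_ι_eq_clT]; exact hgen i (Submodule.mem_map_of_mem hp)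
  | mul a b ha hb => exact fun p hp => by rw [map_mul, mul_assoc]; exact ha _ (hb p hp)
  | add a b ha hb => exact fun p hp => by rw [map_add, add_mul]; exact add_mem (ha p hp) (hb p hp)

end Spanning

section Independence

instance : Nonempty IM :=
  ⟨⟨fun i => 2 * ((i : ℤ) + 1), fun a b h => by simp only; omega,
    fun i => ⟨(i : ℤ) + 1, by ring⟩, 0, 0, fun i _ => by ring⟩⟩

noncomputable def tMono (l : List ℤ) : Module.End ℤ VF := (l.map tOp).prod

lemma fockRep_clMono (l : List ℤ) : fockRep (clMono l) = tMono l := by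
  simp [clMono, tMono, map_list_prod, Function.comp_def, fockRep_clT]

lemma sortedLists_insert_subset {A : Set ℤ} {M : ℤ} (hA : ∀ y ∈ A, y < M) :
    sortedLists (insert M A) ⊆ sortedLists A ∪ (· ++ [M]) '' sortedLists A := by
  rintro l ⟨hl, hlA⟩
  by_cases hM : M ∈ l
  · right
    obtain ⟨l₁, l₂, rfl⟩ := List.append_of_mem hM
    obtain ⟨hl₁, hl₂, hl₁₂⟩ := List.pairwise_append.1 hl
    have hlt : ∀ y ∈ l₂, M < y := (List.pairwise_cons.1 hl₂).1
    obtain rfl : l₂ = [] := List.eq_nil_iff_forall_not_mem.2 fun y hy => by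
      rcases hlA y (by simp [hy]) with rfl | hy'
      · exact lt_irrefl _ (hlt y hy)
      · exact (hlt y hy).not_gt (hA y hy')
    refine ⟨l₁, ⟨hl₁, fun y hy => ?_⟩, rfl⟩
    have hyM : y < M := hl₁₂ y hy M (by simp)
    exact (hlA y (by simp [hy])).resolve_left hyM.ne
  · exact Or.inl ⟨hl, fun y hy => (hlA y hy).resolve_left (ne_of_mem_of_not_mem hy hM)⟩

lemma commute_gammaOp_mul_tOp {M y : ℤ} (h : y < M) :
    Commute (gammaOp * tOp (M + 1)) (tOp y) := by
  have hanti : tOp (M + 1) * tOp y = -(tOp y * tOp (M + 1)) := by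
    refine eq_neg_of_add_eq_zero_left ((tOp_anticomm _ _).trans (if_neg ?_))
    rw [abs_of_pos (by omega)]
    omega
  refine (commute_iff_eq _ _).2 ?_
  rw [mul_assoc, hanti, mul_neg, ← mul_assoc, gammaOp_mul_tOp, neg_mul, neg_neg, mul_assoc]

lemma gammaOp_mul_tOp_succ_commutator (M : ℤ) :
    gammaOp * tOp (M + 1) * tOp M - tOp M * (gammaOp * tOp (M + 1)) = gammaOp := by
  have hM : tOp M * gammaOp = -(gammaOp * tOp M) := by rw [gammaOp_mul_tOp, neg_neg]
  calc gammaOp * tOp (M + 1) * tOp M - tOp M * (gammaOp * tOp (M + 1))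
      = gammaOp * (tOp (M + 1) * tOp M + tOp M * tOp (M + 1)) := by
        rw [← mul_assoc (tOp M), hM]; noncomm_ring
    _ = gammaOp := by rw [tOp_anticomm, if_pos (by simp), mul_one]

lemma linearIndepOn_tMono_insert {A : Set ℤ} {M : ℤ} (hA : ∀ y ∈ A, y < M)
    (h : LinearIndepOn ℤ tMono (sortedLists A)) :
    LinearIndepOn ℤ tMono (sortedLists (insert M A)) := by
  let D := LinearMap.mulLeft ℤ (gammaOp * tOp (M + 1)) -
    LinearMap.mulRight ℤ (gammaOp * tOp (M + 1))
  have hcomm : ∀ l ∈ sortedLists A, Commute (gammaOp * tOp (M + 1)) (tMono l) := fun l hl =>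
    Commute.list_prod_right _ _ fun _ hx => by
      obtain ⟨y, hy, rfl⟩ := List.mem_map.1 hx
      exact commute_gammaOp_mul_tOp (hA y (hl.2 y hy))
  have hD₀ : ∀ l ∈ sortedLists A, D (tMono l) = 0 := fun l hl =>
    sub_eq_zero.2 (hcomm l hl).eq
  have hD₁ : Set.EqOn (D ∘ tMono ∘ (· ++ [M])) (LinearMap.mulRight ℤ gammaOp ∘ tMono)
      (sortedLists A) := fun l hl => by
    have : tMono (l ++ [M]) = tMono l * tOp M := by simp [tMono]
    simp only [Function.comp_apply, this, D, LinearMap.sub_apply, LinearMap.mulLeft_apply,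
      LinearMap.mulRight_apply]
    calc gammaOp * tOp (M + 1) * (tMono l * tOp M) - tMono l * tOp M * (gammaOp * tOp (M + 1))
        = tMono l * (gammaOp * tOp (M + 1) * tOp M - tOp M * (gammaOp * tOp (M + 1))) := by
          rw [← mul_assoc, (hcomm l hl).eq]; noncomm_ring
      _ = tMono l * gammaOp := by rw [gammaOp_mul_tOp_succ_commutator]
  have hΓ : Function.Injective (LinearMap.mulRight ℤ gammaOp) := fun X Y hXY => by
    simpa [mul_assoc, gammaOp_mul_self] using congrArg (· * gammaOp) hXY
  have hdisj : Disjoint (sortedLists A) ((· ++ [M]) '' sortedLists A) := by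
    refine Set.disjoint_left.2 fun _ hl ⟨l', _, hl'⟩ => ?_
    subst hl'
    exact lt_irrefl M (hA M (hl.2 M (by simp)))
  refine (LinearIndepOn.union_of_map_eq_zero D hdisj h hD₀ ?_).mono
    (sortedLists_insert_subset hA)
  exact LinearIndepOn.image_of_comp _ _
    ((linearIndepOn_congr hD₁).2 (h.map_injOn _ hΓ.injOn))

lemma linearIndepOn_tMono : LinearIndepOn ℤ tMono (sortedLists Set.univ) := by
  classical
  have hfin (A : Finset ℤ) : LinearIndepOn ℤ tMono (sortedLists A) := by
    induction A using Finset.induction_on_max with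
    | empty =>
      refine (LinearIndepOn.singleton (i := []) (by simp [tMono])).mono fun l hl => ?_
      exact List.eq_nil_iff_forall_not_mem.2 fun y hy => by simpa using hl.2 y hy
    | insert M A hA ih =>
      rw [Finset.coe_insert]
      exact linearIndepOn_tMono_insert hA ih
  refine (linearIndepOn_iUnion_of_directed
    (Monotone.directed_le fun A B h => sortedLists_mono (Finset.coe_subset.2 h)) hfin).mono ?_
  exact fun l hl => Set.mem_iUnion.2 ⟨l.toFinset, hl.1, by simp⟩

end Independence

/-- The Fock representation of the Clifford algebra `Cl` on `V_F`, sending each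
generator `t_i` to the operator `t_i`, is a well-defined ring homomorphism and
is faithful (injective). -/
theorem clifford_fock_representation_faithful :
    ∃ φ : Cl →+* Module.End ℤ VF,
      (∀ i : ℤ, φ (clT i) = tOp i) ∧ Function.Injective φ := by
  refine ⟨fockRep.toRingHom, fockRep_clT, ?_⟩
  let v : sortedLists Set.univ → Cl := fun l => clMono l
  have hspan : Submodule.span ℤ (Set.range v) = ⊤ := by
    rw [← Set.image_eq_range]
    exact sortedSpan_univ
  have hindep : LinearIndependent ℤ (fockRep.toLinearMap ∘ v) := by
    simpa [v, Function.comp_def, fockRep_clMono] using linearIndepOn_tMono.linearIndependent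
  exact LinearMap.injective_of_linearIndependent hspan hindep
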